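/- Mandelstam–Tamm-type quantum speed limit: let H : ℝ → (E →L[ℂ] E) be a continuous family of self-adjoint bounded operators on a complex Hilbert space E, let ψ₀ be a unit vector, and let ψ : ℝ → E satisfy ψ 0 = ψ₀ and, for every t, ψ'(t) = −i·(H t)(ψ t). Then for every T ≥ 0, arccos|⟨ψ₀, ψ T⟩| ≤ ∫₀ᵀ √(‖(H t)(ψ t)‖² − (Re⟨ψ t, (H t)(ψ t)⟩)²) dt. -/

import Mathlib

open scoped InnerProductSpace
open Real

/-! With `c t = ⟪ψ₀, ψ t⟫`, the function `v = 2 ‖c‖² - 1 = cos (2 arccos ‖c‖)` satisfies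
`|v'| ≤ √(1 - v²) · 2 ΔE`: splitting `ψ₀` and `H ψ` into their components along `ψ` and
orthogonal to it, only the orthogonal components, of norms `√(1 - ‖c‖²)` and `ΔE`, contribute
to `v'`. Integrating the derivative of `arccos ∘ v` then gives `2 arccos ‖c T‖ ≤ 2 ∫ ΔE`. Since
`arccos` is not differentiable at `±1`, this is done for `v / (1 + ε)` and then `ε → 0`. -/

namespace Real

theorem arccos_two_mul_sq_sub_one {x : ℝ} (hx₀ : 0 ≤ x) (hx₁ : x ≤ 1) :
    arccos (2 * x ^ 2 - 1) = 2 * arccos x := by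
  have h := arccos_cos (x := 2 * arccos x) (by linarith [arccos_nonneg x])
    (by linarith [arccos_le_pi_div_two.2 hx₀])
  rwa [cos_two_mul, cos_arccos (by linarith) hx₁] at h

theorem sqrt_one_sub_two_mul_sq_sub_one_sq {x : ℝ} (hx : 0 ≤ x) :
    √(1 - (2 * x ^ 2 - 1) ^ 2) = 2 * x * √(1 - x ^ 2) := by
  rw [show 1 - (2 * x ^ 2 - 1) ^ 2 = (2 * x) ^ 2 * (1 - x ^ 2) by ring,
    sqrt_mul (by positivity), sqrt_sq (by positivity)]

theorem arccos_sub_le_integral_of_abs_lt_one {v v' g : ℝ → ℝ} {a b : ℝ} (hab : a ≤ b)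
    (hv : ∀ t, HasDerivAt v (v' t) t) (hv1 : ∀ t, |v t| < 1)
    (hg : IntervalIntegrable g MeasureTheory.volume a b)
    (hbound : ∀ t, -v' t ≤ √(1 - v t ^ 2) * g t) :
    arccos (v b) - arccos (v a) ≤ ∫ t in a..b, g t := by
  have hderiv : ∀ t, HasDerivAt (fun s => arccos (v s)) (-(1 / √(1 - v t ^ 2)) * v' t) t :=
    fun t => (hasDerivAt_arccos (abs_lt.1 (hv1 t)).1.ne' (abs_lt.1 (hv1 t)).2.ne).comp t (hv t)
  refine intervalIntegral.sub_le_integral_of_hasDeriv_right_of_le hab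
    (fun t _ => (hderiv t).continuousAt.continuousWithinAt) (fun t _ => (hderiv t).hasDerivWithinAt)
    ((intervalIntegrable_iff_integrableOn_Icc_of_le hab).1 hg) fun t _ => ?_
  have hpos : 0 < √(1 - v t ^ 2) :=
    sqrt_pos.2 (by nlinarith [sq_abs (v t), hv1 t, abs_nonneg (v t)])
  rw [neg_mul, ← mul_neg, one_div_mul_eq_div, div_le_iff₀ hpos]
  linarith [hbound t]

theorem arccos_sub_le_integral {v v' g : ℝ → ℝ} {a b : ℝ} (hab : a ≤ b)
    (hv : ∀ t, HasDerivAt v (v' t) t) (hv1 : ∀ t, |v t| ≤ 1) (hg₀ : ∀ t, 0 ≤ g t)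
    (hg : IntervalIntegrable g MeasureTheory.volume a b)
    (hbound : ∀ t, -v' t ≤ √(1 - v t ^ 2) * g t) :
    arccos (v b) - arccos (v a) ≤ ∫ t in a..b, g t := by
  have hshrunk : ∀ ε > 0, arccos (v b / (1 + ε)) - arccos (v a / (1 + ε)) ≤ ∫ t in a..b, g t := by
    intro ε hε
    refine arccos_sub_le_integral_of_abs_lt_one (v := fun t => v t / (1 + ε))
      (v' := fun t => v' t / (1 + ε)) hab (fun t => (hv t).div_const (1 + ε)) (fun t => ?_) hg
      (fun t => ?_)
    · rw [abs_div, abs_of_pos (by linarith : 0 < 1 + ε), div_lt_one (by linarith)]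
      linarith [hv1 t]
    · have hsqrt : √(1 - v t ^ 2) ≤ (1 + ε) * √(1 - (v t / (1 + ε)) ^ 2) := by
        calc √(1 - v t ^ 2) ≤ √((1 + ε) ^ 2 - v t ^ 2) := sqrt_le_sqrt (by nlinarith)
          _ = (1 + ε) * √(1 - (v t / (1 + ε)) ^ 2) := by
            rw [show (1 + ε) ^ 2 - v t ^ 2 = (1 + ε) ^ 2 * (1 - (v t / (1 + ε)) ^ 2) by
              field_simp, sqrt_mul (sq_nonneg _), sqrt_sq (by linarith)]
      rw [← neg_div, div_le_iff₀ (by linarith)]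
      nlinarith [hbound t, hg₀ t]
  have hlim : Filter.Tendsto (fun ε : ℝ => arccos (v b / (1 + ε)) - arccos (v a / (1 + ε)))
      (nhdsWithin 0 (Set.Ioi 0)) (nhds (arccos (v b) - arccos (v a))) := by
    apply tendsto_nhdsWithin_of_tendsto_nhds
    have : ContinuousAt (fun ε : ℝ => arccos (v b / (1 + ε)) - arccos (v a / (1 + ε))) 0 := by
      fun_prop (disch := norm_num)
    simpa using this.tendsto
  exact le_of_tendsto hlim (eventually_nhdsWithin_of_forall hshrunk)

end Real

section InnerProduct

variable {E : Type*} [NormedAddCommGroup E] [InnerProductSpace ℂ E]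

open ComplexConjugate

theorem Complex.inner_neg_I_mul (c z : ℂ) :
    ⟪c, -Complex.I * z⟫_ℝ = (conj c * z).im := by
  simp only [Complex.inner, Complex.mul_re, Complex.mul_im, Complex.neg_re, Complex.neg_im,
    Complex.I_re, Complex.I_im, Complex.conj_re, Complex.conj_im]
  ring

theorem inner_sub_inner_smul_sub_inner_smul {y : E} (hy : ‖y‖ = 1) (x z : E) :
    ⟪x - ⟪y, x⟫_ℂ • y, z - ⟪y, z⟫_ℂ • y⟫_ℂ = ⟪x, z⟫_ℂ - ⟪x, y⟫_ℂ * ⟪y, z⟫_ℂ := by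
  simp only [inner_sub_left, inner_sub_right, inner_smul_left, inner_smul_right, inner_conj_symm,
    inner_self_eq_one_of_norm_eq_one hy]
  ring

theorem norm_sub_inner_smul_sq {y : E} (hy : ‖y‖ = 1) (x : E) :
    ‖x - ⟪y, x⟫_ℂ • y‖ ^ 2 = ‖x‖ ^ 2 - ‖⟪x, y⟫_ℂ‖ ^ 2 := by
  have h := inner_sub_inner_smul_sub_inner_smul hy x x
  rw [inner_self_eq_norm_sq_to_K, inner_self_eq_norm_sq_to_K, ← inner_conj_symm x y,
    Complex.conj_mul', norm_inner_symm] at h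
  exact_mod_cast congrArg Complex.re h

theorem abs_im_conj_inner_mul_inner_le {y A : E} (hy : ‖y‖ = 1) (hA : (⟪y, A⟫_ℂ).im = 0)
    (x : E) :
    |(conj ⟪x, y⟫_ℂ * ⟪x, A⟫_ℂ).im|
      ≤ ‖⟪x, y⟫_ℂ‖ * √(‖x‖ ^ 2 - ‖⟪x, y⟫_ℂ‖ ^ 2) * √(‖A‖ ^ 2 - (⟪y, A⟫_ℂ).re ^ 2) := by
  set c := ⟪x, y⟫_ℂ
  set φ := x - ⟪y, x⟫_ℂ • y
  set ξ := A - ⟪y, A⟫_ℂ • y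
  have hsplit : ⟪x, A⟫_ℂ = ⟪φ, ξ⟫_ℂ + c * ⟪y, A⟫_ℂ := by
    rw [inner_sub_inner_smul_sub_inner_smul hy]; ring
  have hreal : (conj c * (c * ⟪y, A⟫_ℂ)).im = 0 := by
    rw [← mul_assoc, Complex.conj_mul', ← Complex.ofReal_pow, Complex.im_ofReal_mul, hA, mul_zero]
  have hφ : ‖φ‖ = √(‖x‖ ^ 2 - ‖c‖ ^ 2) := by
    rw [← norm_sub_inner_smul_sq hy, sqrt_sq (norm_nonneg _)]
  have hξ : ‖ξ‖ ≤ √(‖A‖ ^ 2 - (⟪y, A⟫_ℂ).re ^ 2) := by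
    rw [← sqrt_sq (norm_nonneg ξ), norm_sub_inner_smul_sq hy, norm_inner_symm]
    refine sqrt_le_sqrt (sub_le_sub_left ?_ _)
    rw [← sq_abs]
    exact pow_le_pow_left₀ (abs_nonneg _) (Complex.abs_re_le_norm _) 2
  calc |(conj c * ⟪x, A⟫_ℂ).im| = |(conj c * ⟪φ, ξ⟫_ℂ).im| := by
        rw [hsplit, mul_add, Complex.add_im, hreal, add_zero]
    _ ≤ ‖c‖ * ‖⟪φ, ξ⟫_ℂ‖ := by
        simpa using Complex.abs_im_le_norm (conj c * ⟪φ, ξ⟫_ℂ)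
    _ ≤ ‖c‖ * (‖φ‖ * ‖ξ‖) := by gcongr; exact norm_inner_le_norm _ _
    _ ≤ _ := by rw [hφ, ← mul_assoc]; gcongr

theorem norm_eq_norm_of_hasDerivAt_neg_I_smul {H : ℝ → E →ₗ[ℂ] E} (hH : ∀ t, (H t).IsSymmetric)
    {ψ : ℝ → E} (hψ : ∀ t, HasDerivAt ψ (-Complex.I • H t (ψ t)) t) (s t : ℝ) :
    ‖ψ s‖ = ‖ψ t‖ := by
  have hconst : ∀ t, HasDerivAt (fun s => ⟪ψ s, ψ s⟫_ℂ) 0 t := fun t => by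
    have hzero : ⟪ψ t, -Complex.I • H t (ψ t)⟫_ℂ + ⟪-Complex.I • H t (ψ t), ψ t⟫_ℂ = 0 := by
      rw [inner_smul_left, inner_smul_right, hH t]
      simp
    exact hzero ▸ (hψ t).inner ℂ (hψ t)
  have h := is_const_of_deriv_eq_zero (fun t => (hconst t).differentiableAt)
    (fun t => (hconst t).deriv) s t
  rw [inner_self_eq_norm_sq_to_K, inner_self_eq_norm_sq_to_K] at h
  exact (sq_eq_sq₀ (norm_nonneg _) (norm_nonneg _)).1 (by exact_mod_cast h)

end InnerProduct

theorem mandelstam_tamm_speed_limit_general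
    {E : Type*} [NormedAddCommGroup E] [InnerProductSpace ℂ E]
    (H : ℝ → (E →L[ℂ] E)) (hHcont : Continuous H)
    (hHsa : ∀ t, ∀ x y : E, ⟪(H t) x, y⟫_ℂ = ⟪x, (H t) y⟫_ℂ)
    (ψ₀ : E) (hψ₀ : ‖ψ₀‖ = 1) (ψ : ℝ → E) (hinit : ψ 0 = ψ₀)
    (hψ : ∀ t, HasDerivAt ψ ((-Complex.I) • (H t) (ψ t)) t)
    (T : ℝ) (hT : 0 ≤ T) :
    Real.arccos ‖⟪ψ₀, ψ T⟫_ℂ‖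
      ≤ ∫ t in (0 : ℝ)..T,
          Real.sqrt (‖(H t) (ψ t)‖ ^ 2 - ((⟪ψ t, (H t) (ψ t)⟫_ℂ).re) ^ 2) := by
  have hsym : ∀ t, (H t : E →ₗ[ℂ] E).IsSymmetric := hHsa
  have hnorm : ∀ t, ‖ψ t‖ = 1 := fun t => by
    rw [norm_eq_norm_of_hasDerivAt_neg_I_smul hsym hψ t 0, hinit, hψ₀]
  have hoverlap : ∀ t, HasDerivAt (fun s => ⟪ψ₀, ψ s⟫_ℂ) (-Complex.I * ⟪ψ₀, H t (ψ t)⟫_ℂ) t :=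
    fun t => by simpa [inner_smul_right] using (hasDerivAt_const t ψ₀).inner ℂ (hψ t)
  have hle_one : ∀ t, ‖⟪ψ₀, ψ t⟫_ℂ‖ ≤ 1 := fun t => by
    simpa [hψ₀, hnorm t] using norm_inner_le_norm (𝕜 := ℂ) ψ₀ (ψ t)
  have hψcont : Continuous ψ := continuous_iff_continuousAt.2 fun t => (hψ t).continuousAt
  have hrate : ∀ t, -(2 * (2 * ⟪⟪ψ₀, ψ t⟫_ℂ, -Complex.I * ⟪ψ₀, H t (ψ t)⟫_ℂ⟫_ℝ))
      ≤ √(1 - (2 * ‖⟪ψ₀, ψ t⟫_ℂ‖ ^ 2 - 1) ^ 2)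
        * (2 * √(‖H t (ψ t)‖ ^ 2 - (⟪ψ t, H t (ψ t)⟫_ℂ).re ^ 2)) := fun t => by
    have h := abs_im_conj_inner_mul_inner_le (hnorm t) ((hsym t).im_inner_self_apply (ψ t)) ψ₀
    rw [hψ₀, one_pow, ContinuousLinearMap.coe_coe] at h
    rw [sqrt_one_sub_two_mul_sq_sub_one_sq (norm_nonneg _), Complex.inner_neg_I_mul]
    linarith [(neg_le_abs _).trans h]
  have hfidelity : ∀ t, |2 * ‖⟪ψ₀, ψ t⟫_ℂ‖ ^ 2 - 1| ≤ 1 := fun t => by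
    have := norm_nonneg ⟪ψ₀, ψ t⟫_ℂ
    exact abs_le.2 ⟨by nlinarith, by nlinarith [hle_one t]⟩
  have h := arccos_sub_le_integral hT (fun t => ((hoverlap t).norm_sq.const_mul 2).sub_const 1)
    hfidelity (fun t => by positivity) ((by fun_prop : Continuous _).intervalIntegrable 0 T) hrate
  rw [arccos_two_mul_sq_sub_one (norm_nonneg _) (hle_one T), hinit,
    inner_self_eq_one_of_norm_eq_one hψ₀, intervalIntegral.integral_const_mul] at h
  norm_num at h
  linarith

/-- Mandelstam–Tamm-type quantum speed limit: if `ψ 0 = ψ₀`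
and `ψ' t = -i (H t) (ψ t)` for all `t`, then for `T ≥ 0`,
`arccos |⟨ψ₀, ψ T⟩| ≤ ∫₀ᵀ √(‖(H t)(ψ t)‖² - (Re⟨ψ t, (H t)(ψ t)⟩)²) dt`. -/
theorem mandelstam_tamm_speed_limit
    {E : Type*} [NormedAddCommGroup E] [InnerProductSpace ℂ E] [CompleteSpace E]
    (H : ℝ → (E →L[ℂ] E)) (hHcont : Continuous H)
    (hHsa : ∀ t, ∀ x y : E, ⟪(H t) x, y⟫_ℂ = ⟪x, (H t) y⟫_ℂ)
    (ψ₀ : E) (hψ₀ : ‖ψ₀‖ = 1) (ψ : ℝ → E) (hinit : ψ 0 = ψ₀)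
    (hψ : ∀ t, HasDerivAt ψ ((-Complex.I) • (H t) (ψ t)) t)
    (T : ℝ) (hT : 0 ≤ T) :
    Real.arccos ‖⟪ψ₀, ψ T⟫_ℂ‖
      ≤ ∫ t in (0 : ℝ)..T,
          Real.sqrt (‖(H t) (ψ t)‖ ^ 2 - ((⟪ψ t, (H t) (ψ t)⟫_ℂ).re) ^ 2) :=
  mandelstam_tamm_speed_limit_general H hHcont hHsa ψ₀ hψ₀ ψ hinit hψ T hT
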